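/- arXiv:1810.02776 — 5 statements merged into one kernel-verified Lean document; each statement's English description precedes it below -/
import Mathlib

section
/- Let R be a finite unital ring and a, b ∈ R. Then aR = bR if and only if a = bu for some invertible element u ∈ R. -/
/-!
Write `a = b x` and `b = a y`, so that `a` is fixed by right multiplication with `t = y x` and `b`
by `s = x y`. Viewing `R` as the endomorphism ring of the right module `R_R`, Fitting's lemma
splits `R = ker tⁿ ⊕ im tⁿ = ker sⁿ ⊕ im sⁿ`, and `x` maps `im tⁿ` isomorphically onto `im sⁿ`.
For finite modules direct summands cancel (Lovász: a finite module is determined up to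
isomorphism by the numbers of homomorphisms into it), so also `ker tⁿ ≅ ker sⁿ`. Gluing the two
isomorphisms gives an automorphism `u` of `R_R`, i.e. a unit, and `a = b u` because `a` vanishes
on `ker tⁿ` and `b` on `ker sⁿ`.
-/

universe u v

open Function LinearMap

section Counting

variable {S : Type u} [Ring S] {T M N P : Type v} [AddCommGroup T] [Module S T]
  [AddCommGroup M] [Module S M] [AddCommGroup N] [Module S N] [AddCommGroup P] [Module S P]

instance [Finite T] [Finite M] : Finite (T →ₗ[S] M) :=
  Finite.of_injective (fun f : T →ₗ[S] M => (f : T → M)) DFunLike.coe_injective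

instance [Finite T] (K : Submodule S T) : Finite (T ⧸ K) :=
  Finite.of_surjective _ K.mkQ_surjective

def Submodule.kerEqEquivInjective (K : Submodule S T) :
    {f : T →ₗ[S] M // ker f = K} ≃ {g : (T ⧸ K) →ₗ[S] M // Injective g} where
  toFun f := ⟨K.liftQ f.1 f.2.ge, by
    rw [← ker_eq_bot]; exact K.ker_liftQ_eq_bot _ _ f.2.le⟩
  invFun g := ⟨g.1 ∘ₗ K.mkQ, by
    rw [ker_comp, ker_eq_bot.mpr g.2, Submodule.comap_bot, Submodule.ker_mkQ]⟩
  left_inv f := Subtype.ext (K.liftQ_mkQ _ _)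
  right_inv g := Subtype.ext (Submodule.linearMap_qext _ (K.liftQ_mkQ _ _))

theorem Submodule.natCard_quotient_lt [Finite T] {K : Submodule S T} (hK : K ≠ ⊥) :
    Nat.card (T ⧸ K) < Nat.card T := by
  have : Nontrivial K := Submodule.nontrivial_iff_ne_bot.mpr hK
  rw [K.card_eq_card_quotient_mul_card]
  exact lt_mul_of_one_lt_left (Nat.card_pos (α := T ⧸ K)) (Finite.one_lt_card (α := K))

theorem LinearMap.natCard_eq_sum_natCard_ker_eq [Finite T] [Fintype (Submodule S T)] [Finite M] :
    Nat.card (T →ₗ[S] M) = ∑ K : Submodule S T, Nat.card {f : T →ₗ[S] M // ker f = K} := by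
  rw [← Nat.card_sigma, Nat.card_congr (Equiv.sigmaFiberEquiv fun f : T →ₗ[S] M => ker f)]

/-- Every linear map `T → M` is an injective map on the quotient of `T` by its kernel, so the
counts of injective maps are recovered from the counts of all maps by induction on `T`. -/
theorem LinearMap.natCard_injective_eq_of_natCard_eq [Finite M] [Finite N]
    (h : ∀ (T : Type v) [AddCommGroup T] [Module S T] [Finite T],
      Nat.card (T →ₗ[S] M) = Nat.card (T →ₗ[S] N))
    (T : Type v) [AddCommGroup T] [Module S T] [Finite T] :
    Nat.card {f : T →ₗ[S] M // Injective f} = Nat.card {f : T →ₗ[S] N // Injective f} := by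
  classical
  induction hn : Nat.card T using Nat.strong_induction_on generalizing T with
  | _ n ih =>
  have := Fintype.ofFinite (Submodule S T)
  have hquot (K : Submodule S T) (hK : K ≠ ⊥) :
      Nat.card {f : T →ₗ[S] M // ker f = K} = Nat.card {f : T →ₗ[S] N // ker f = K} := by
    rw [Nat.card_congr K.kerEqEquivInjective, Nat.card_congr K.kerEqEquivInjective]
    exact ih _ (hn ▸ Submodule.natCard_quotient_lt hK) (T ⧸ K) rfl
  have hbot (L : Type v) [AddCommGroup L] [Module S L] :
      {f : T →ₗ[S] L // Injective f} ≃ {f : T →ₗ[S] L // ker f = ⊥} :=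
    Equiv.subtypeEquivRight fun _ => ker_eq_bot.symm
  have hT := h T
  rw [natCard_eq_sum_natCard_ker_eq, natCard_eq_sum_natCard_ker_eq,
    Fintype.sum_eq_add_sum_compl ⊥, Fintype.sum_eq_add_sum_compl ⊥,
    Finset.sum_congr rfl fun K hK => hquot K (Finset.mem_compl.mp hK ∘ Finset.mem_singleton.mpr)]
    at hT
  rw [Nat.card_congr (hbot M), Nat.card_congr (hbot N)]
  omega

theorem LinearEquiv.nonempty_of_natCard_linearMap_eq [Finite M] [Finite N]
    (h : ∀ (T : Type v) [AddCommGroup T] [Module S T] [Finite T],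
      Nat.card (T →ₗ[S] M) = Nat.card (T →ₗ[S] N)) :
    Nonempty (M ≃ₗ[S] N) := by
  have hMN := natCard_injective_eq_of_natCard_eq h M
  have hNM := natCard_injective_eq_of_natCard_eq h N
  obtain ⟨⟨f, hf⟩⟩ : Nonempty {f : M →ₗ[S] N // Injective f} :=
    Nat.card_pos_iff.mp (hMN ▸ Nat.card_pos_iff.mpr ⟨⟨⟨id, injective_id⟩⟩, inferInstance⟩) |>.1
  obtain ⟨⟨g, hg⟩⟩ : Nonempty {g : N →ₗ[S] M // Injective g} :=
    Nat.card_pos_iff.mp (hNM ▸ Nat.card_pos_iff.mpr ⟨⟨⟨id, injective_id⟩⟩, inferInstance⟩) |>.1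
  exact ⟨.ofBijective f (hf.bijective_of_nat_card_le (Nat.card_le_card_of_injective g hg))⟩

theorem LinearMap.natCard_prod :
    Nat.card (T →ₗ[S] P × M) = Nat.card (T →ₗ[S] P) * Nat.card (T →ₗ[S] M) := by
  rw [← Nat.card_prod, Nat.card_congr (LinearMap.prodEquiv ℕ).toEquiv]

theorem LinearEquiv.nonempty_of_prod [Finite P] [Finite M] [Finite N]
    (e : (P × M) ≃ₗ[S] (P × N)) : Nonempty (M ≃ₗ[S] N) := by
  refine nonempty_of_natCard_linearMap_eq fun T _ _ _ => ?_
  have he := Nat.card_congr <| LinearEquiv.arrowCongrAddEquiv (σ₁₁' := RingHom.id S)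
    (σ₂₂' := RingHom.id S) (LinearEquiv.refl S T) e |>.toEquiv
  rw [natCard_prod, natCard_prod] at he
  exact Nat.eq_of_mul_eq_mul_left Nat.card_pos he

end Counting

variable {S : Type u} [Ring S] {M : Type v} [AddCommGroup M] [Module S M]

theorem Submodule.exists_linearEquiv_extend_of_isCompl [Finite M] {K P K' P' : Submodule S M}
    (hK : IsCompl K P) (hK' : IsCompl K' P') (e : P ≃ₗ[S] P') :
    ∃ u : M ≃ₗ[S] M, (∀ x ∈ K, u x ∈ K') ∧ ∀ x : P, u x = e x := by
  obtain ⟨f⟩ := LinearEquiv.nonempty_of_prod <|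
    (prodEquivOfIsCompl P K hK.symm).trans <|
      (prodEquivOfIsCompl P' K' hK'.symm).symm.trans <| e.symm.prodCongr (.refl S K')
  refine ⟨(prodEquivOfIsCompl K P hK).symm.trans <|
    (f.prodCongr e).trans (prodEquivOfIsCompl K' P' hK'), fun x hx => ?_, fun x => ?_⟩
  · simp only [LinearEquiv.trans_apply, prodEquivOfIsCompl_symm_apply_left K P hK ⟨x, hx⟩]
    simp
  · simp only [LinearEquiv.trans_apply, prodEquivOfIsCompl_symm_apply_right K P hK x]
    simp

theorem mul_pow_eq_self {R : Type*} [Monoid R] {a t : R} (h : a * t = a) (n : ℕ) :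
    a * t ^ n = a := by
  induction n with
  | zero => rw [pow_zero, mul_one]
  | succ n ih => rw [pow_succ, ← mul_assoc, ih, h]

namespace Module.End

theorem mapsTo_range_pow (x y : Module.End S M) (n : ℕ) :
    ∀ m ∈ range ((y * x) ^ n), x m ∈ range ((x * y) ^ n) := by
  rintro _ ⟨m, rfl⟩
  refine ⟨x m, ?_⟩
  have hsemi : SemiconjBy x (y * x) (x * y) := (mul_assoc _ _ _).symm
  rw [← mul_apply, ← mul_apply, hsemi.pow_right n]

theorem injective_restrict_range_pow (x y : Module.End S M) {n : ℕ} (hn : n ≠ 0)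
    (h : Disjoint (ker ((y * x) ^ n)) (range ((y * x) ^ n))) :
    Function.Injective (x.restrict (mapsTo_range_pow x y n)) := by
  rw [← ker_eq_bot, Submodule.eq_bot_iff]
  rintro ⟨m, hm⟩ hm0
  have hxm : x m = 0 := congrArg Subtype.val hm0
  have hker : m ∈ ker ((y * x) ^ n) := by
    obtain ⟨k, rfl⟩ := Nat.exists_eq_succ_of_ne_zero hn
    rw [mem_ker, pow_succ, mul_apply, mul_apply, hxm, map_zero, map_zero]
  exact Subtype.ext (Submodule.disjoint_def.mp h m hker hm)

theorem associated_of_dvd_dvd [Finite M] {a b : Module.End S M} (hab : a ∣ b) (hba : b ∣ a) :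
    Associated b a := by
  obtain ⟨y, rfl⟩ := hab
  obtain ⟨x, hx⟩ := hba
  have ha : a * (y * x) = a := by rw [← mul_assoc, ← hx]
  have hb : a * y * (x * y) = a * y := by rw [← mul_assoc, ← hx]
  obtain ⟨n, ⟨ht, hs⟩, hn⟩ := ((eventually_isCompl_ker_pow_range_pow (y * x)).and
    (eventually_isCompl_ker_pow_range_pow (x * y))).and (Filter.eventually_ne_atTop 0) |>.exists
  have hX := injective_restrict_range_pow x y hn ht.disjoint
  have hY := injective_restrict_range_pow y x hn hs.disjoint
  obtain ⟨u, hK, hP⟩ := Submodule.exists_linearEquiv_extend_of_isCompl ht hs <|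
    .ofBijective _ (hX.bijective_of_nat_card_le (Nat.card_le_card_of_injective _ hY))
  refine ⟨((isUnit_iff _).mpr u.bijective).unit, LinearMap.ext fun m => ?_⟩
  obtain ⟨k, hk, p, hp, rfl⟩ :=
    Submodule.mem_sup.mp (ht.sup_eq_top ▸ Submodule.mem_top (x := m))
  have hak : a k = 0 := by
    rw [← mul_pow_eq_self ha n, mul_apply, mem_ker.mp hk, map_zero]
  have hayk : (a * y) (u k) = 0 := by
    rw [← mul_pow_eq_self hb n, mul_apply, mem_ker.mp (hK k hk), map_zero]
  have hayp : (a * y) (u p) = a p := by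
    rw [hP ⟨p, hp⟩, LinearEquiv.ofBijective_apply, coe_restrict_apply, ← mul_apply, ← hx]
  change (a * y) (u (k + p)) = a (k + p)
  rw [map_add, map_add, map_add, hak, hayk, hayp, zero_add]

end Module.End

theorem Finite.associated_of_dvd_dvd {R : Type*} [Ring R] [Finite R] {a b : R} (hab : a ∣ b)
    (hba : b ∣ a) : Associated b a := by
  let e := RingEquiv.moduleEndSelfOp R
  simpa using (Module.End.associated_of_dvd_dvd (map_dvd e hab) (map_dvd e hba)).map e.symm

theorem Set.range_mul_left_eq_iff {M : Type*} [Monoid M] {a b : M} :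
    Set.range (a * ·) = Set.range (b * ·) ↔ a ∣ b ∧ b ∣ a := by
  have hrange (c : M) : Set.range (c * ·) = {d | c ∣ d} := by
    ext d; exact ⟨fun ⟨r, hr⟩ => ⟨r, hr.symm⟩, fun ⟨r, hr⟩ => ⟨r, hr.symm⟩⟩
  simp only [hrange, Set.ext_iff, Set.mem_ofPred_eq]
  exact ⟨fun h => ⟨(h b).mpr dvd_rfl, (h a).mp dvd_rfl⟩,
    fun ⟨hab, hba⟩ _ => ⟨hba.trans, hab.trans⟩⟩

/-- In a finite unital ring, `aR = bR` iff `a = b * u` for some unit `u`. -/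
theorem stmt_1 (R : Type*) [Ring R] [Fintype R] (a b : R) :
    Set.range (fun r : R => a * r) = Set.range (fun r : R => b * r) ↔
      ∃ u : Rˣ, a = b * u := by
  rw [Set.range_mul_left_eq_iff]
  refine ⟨fun ⟨hab, hba⟩ => ?_, fun ⟨u, hu⟩ => ?_⟩
  · obtain ⟨u, hu⟩ := Finite.associated_of_dvd_dvd hab hba
    exact ⟨u, hu.symm⟩
  · exact (Associated.dvd_dvd ⟨u, hu.symm⟩).symm
end

section
/- Let ≈ be an equivalence relation on R = Mₙ(F), F a field, such that for all x, y, z, w ∈ R: if x ≈ z, y ≈ w and xy = 0, then zw = 0. Then for any a, b ∈ R, a ≈ b implies that a = bu = vb for some invertible matrices u, v. -/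
/-!
Taking `y ≈ y` and `a ≈ b` (in both directions) in the hypothesis shows that `a` and `b` have the
same right annihilator and the same left annihilator. Testing the right annihilator on matrices
with constant columns gives `ker a = ker b`; for linear maps with equal kernels, `b x ↦ a x` is an
isomorphism of their ranges, which extends to an automorphism `v` of the whole space (complements
of the ranges have equal dimension), so `a = v b`. Transposing gives `a = b u`.
-/

open LinearMap

theorem LinearEquiv.exists_extend {K V : Type*} [DivisionRing K] [AddCommGroup V] [Module K V]
    [FiniteDimensional K V] {p q : Submodule K V} (e : p ≃ₗ[K] q) :
    ∃ e' : V ≃ₗ[K] V, ∀ x : p, e' x = e x := by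
  obtain ⟨C, hC⟩ := p.exists_isCompl
  obtain ⟨C', hC'⟩ := q.exists_isCompl
  have hdim : Module.finrank K C = Module.finrank K C' := by
    have := Submodule.finrank_add_eq_of_isCompl hC
    have := Submodule.finrank_add_eq_of_isCompl hC'
    have := e.finrank_eq
    omega
  refine ⟨(Submodule.prodEquivOfIsCompl p C hC).symm ≪≫ₗ
    (e.prodCongr (LinearEquiv.ofFinrankEq C C' hdim)) ≪≫ₗ
    Submodule.prodEquivOfIsCompl q C' hC', fun x => ?_⟩
  simp

theorem LinearMap.exists_rangeEquiv_of_ker_eq {R M N : Type*} [Ring R] [AddCommGroup M]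
    [Module R M] [AddCommGroup N] [Module R N] {f g : M →ₗ[R] N} (h : ker f = ker g) :
    ∃ e : range g ≃ₗ[R] range f, ∀ x, (e ⟨g x, mem_range_self g x⟩ : N) = f x :=
  ⟨g.quotKerEquivRange.symm ≪≫ₗ Submodule.quotEquivOfEq _ _ h.symm ≪≫ₗ f.quotKerEquivRange,
    fun x => by simp [Submodule.quotEquivOfEq_mk]⟩

theorem LinearMap.exists_linearEquiv_eq_comp_of_ker_eq {K V W : Type*} [DivisionRing K]
    [AddCommGroup V] [Module K V] [AddCommGroup W] [Module K W] [FiniteDimensional K W]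
    {f g : V →ₗ[K] W} (h : ker f = ker g) : ∃ e : W ≃ₗ[K] W, f = e.toLinearMap ∘ₗ g := by
  obtain ⟨e₀, he₀⟩ := exists_rangeEquiv_of_ker_eq h
  obtain ⟨e, he⟩ := e₀.exists_extend
  exact ⟨e, LinearMap.ext fun x => ((he ⟨g x, mem_range_self g x⟩).trans (he₀ x)).symm⟩

namespace Matrix

variable {K n : Type*} [Field K] [Fintype n] [DecidableEq n]

omit [DecidableEq n] in
theorem mulVec_eq_zero_iff_mul_replicateCol_eq_zero (a : Matrix n n K) (x : n → K) :
    a *ᵥ x = 0 ↔ a * replicateCol n x = 0 := by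
  rw [← replicateCol_mulVec]
  refine ⟨fun hx => by rw [hx, replicateCol_zero], fun hx => funext fun i => ?_⟩
  simpa using congr_fun (congr_fun hx i) i

theorem exists_isUnit_eq_mul_of_mul_eq_zero_iff {a b : Matrix n n K}
    (h : ∀ y : Matrix n n K, a * y = 0 ↔ b * y = 0) : ∃ v, IsUnit v ∧ a = v * b := by
  have hker : ker (toLin' a) = ker (toLin' b) := by
    ext x
    simp only [mem_ker, toLin'_apply, mulVec_eq_zero_iff_mul_replicateCol_eq_zero, h]
  obtain ⟨e, he⟩ := exists_linearEquiv_eq_comp_of_ker_eq hker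
  refine ⟨toLinAlgEquiv'.symm e, ((Module.End.isUnit_iff _).2 e.bijective).map _,
    toLinAlgEquiv'.injective ?_⟩
  rwa [map_mul, AlgEquiv.apply_symm_apply]

theorem exists_isUnit_eq_mul_of_mul_eq_zero_iff' {a b : Matrix n n K}
    (h : ∀ y : Matrix n n K, y * a = 0 ↔ y * b = 0) : ∃ u, IsUnit u ∧ a = b * u := by
  have hT : ∀ y : Matrix n n K, aᵀ * y = 0 ↔ bᵀ * y = 0 := fun y => by
    have key (c : Matrix n n K) : cᵀ * y = 0 ↔ yᵀ * c = 0 := by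
      rw [← transpose_eq_zero, transpose_mul, transpose_transpose]
    rw [key, key, h]
  obtain ⟨v, hv, hav⟩ := exists_isUnit_eq_mul_of_mul_eq_zero_iff hT
  refine ⟨vᵀ, (isUnit_transpose v).2 hv, ?_⟩
  rw [← transpose_transpose a, hav, transpose_mul, transpose_transpose]

end Matrix

theorem stmt_4_general (F : Type*) [Field F] (n : ℕ)
    (E : Matrix (Fin n) (Fin n) F → Matrix (Fin n) (Fin n) F → Prop)
    (hE : Equivalence E)
    (h : ∀ x y z w : Matrix (Fin n) (Fin n) F,
      E x z → E y w → x * y = 0 → z * w = 0)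
    (a b : Matrix (Fin n) (Fin n) F) (hab : E a b) :
    ∃ u v : Matrix (Fin n) (Fin n) F,
      IsUnit u ∧ IsUnit v ∧ a = b * u ∧ a = v * b := by
  have hr : ∀ y, a * y = 0 ↔ b * y = 0 := fun y =>
    ⟨h a y b y hab (hE.refl y), h b y a y (hE.symm hab) (hE.refl y)⟩
  have hl : ∀ y, y * a = 0 ↔ y * b = 0 := fun y =>
    ⟨h y a y b (hE.refl y) hab, h y b y a (hE.refl y) (hE.symm hab)⟩
  obtain ⟨u, hu, hau⟩ := Matrix.exists_isUnit_eq_mul_of_mul_eq_zero_iff' hl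
  obtain ⟨v, hv, hav⟩ := Matrix.exists_isUnit_eq_mul_of_mul_eq_zero_iff hr
  exact ⟨u, v, hu, hv, hau, hav⟩

/-- If `≈` is an equivalence relation on `Mₙ(F)` (`F` a finite field) such that
`x ≈ z`, `y ≈ w` and `xy = 0` imply `zw = 0`, then `a ≈ b` implies
`a = b*u = v*b` for some invertible matrices `u, v`. -/
theorem stmt_4 (F : Type*) [Field F] [Fintype F] (n : ℕ)
    (E : Matrix (Fin n) (Fin n) F → Matrix (Fin n) (Fin n) F → Prop)
    (hE : Equivalence E)
    (h : ∀ x y z w : Matrix (Fin n) (Fin n) F,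
      E x z → E y w → x * y = 0 → z * w = 0)
    (a b : Matrix (Fin n) (Fin n) F) (hab : E a b) :
    ∃ u v : Matrix (Fin n) (Fin n) F,
      IsUnit u ∧ IsUnit v ∧ a = b * u ∧ a = v * b :=
  stmt_4_general F n E hE h a b hab
end

section
/- Let q > 1 be a prime power and n > 1. The function d(q) = qⁿ⁻¹ + qⁿ⁻² + ⋯ + q + 2 is strictly increasing in q on the positive integers; consequently, if Θ(Mₙ(F)) ≅ Θ(M_m(E)) for finite fields F, E and n > 1, then n = m and F ≅ E. -/
/-- The associatedness relation on a ring: `a ~ b` iff `a = b*u = v*b` for units. -/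
def ringAssoc (R : Type*) [Ring R] (a b : R) : Prop :=
  ∃ u v : Rˣ, a = b * u ∧ a = v * b

/-- Directed edges of the compressed zero-divisor graph `Θ(R)`:
`[a] → [b]` iff `a * b = 0`. -/
def thetaEdge (R : Type*) [Ring R] (x y : Quot (ringAssoc R)) : Prop :=
  ∃ a b : R, Quot.mk _ a = x ∧ Quot.mk _ b = y ∧ a * b = 0

/-- `Θ(R) ≅ Θ(S)` as directed graphs. -/
def ThetaIso (R S : Type*) [Ring R] [Ring S] : Prop :=
  ∃ e : Quot (ringAssoc R) ≃ Quot (ringAssoc S),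
    ∀ x y, thetaEdge R x y ↔ thetaEdge S (e x) (e y)

/-!
A graph isomorphism `Θ(Mₙ(F)) ≅ Θ(M_m(E))` preserves inclusion of out-neighbourhoods. In
`Θ(Mₙ(F))` the out-neighbourhood of `[a]` is determined by `ker a`, and inclusion of
out-neighbourhoods is inclusion of kernels, since every subspace is the image of a matrix.
Hence the subspace lattices of `Fⁿ` and `Eᵐ` are isomorphic. Their lengths give `n = m`, and
their numbers of atoms give `1 + q + ⋯ + qⁿ⁻¹ = 1 + q' + ⋯ + q'ⁿ⁻¹` for `q = |F|`, `q' = |E|`;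
this sum is strictly increasing in `q` when `n > 1`, so `|F| = |E|`.
-/

open LinearMap (ker range)

theorem geom_sum_strictMono {n : ℕ} (hn : 1 < n) :
    StrictMono fun q : ℕ => ∑ i ∈ Finset.range n, q ^ i := fun q q' hlt =>
  Finset.sum_lt_sum (fun i _ => Nat.pow_le_pow_left hlt.le i)
    ⟨1, Finset.mem_range.mpr hn, by simpa using hlt⟩

theorem nonempty_orderIso_of_surjective_of_le_iff {A α β : Type*} [PartialOrder α]
    [PartialOrder β] {f : A → α} {g : A → β} (hf : Function.Surjective f)
    (hg : Function.Surjective g) (h : ∀ x y, f x ≤ f y ↔ g x ≤ g y) :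
    Nonempty (α ≃o β) := by
  let φ : α ↪o β := OrderEmbedding.ofMapLEIff (g ∘ Function.surjInv hf) fun a b => by
    simp only [Function.comp_apply, ← h, Function.surjInv_eq hf]
  refine ⟨OrderIso.ofSurjective φ fun b => ?_⟩
  obtain ⟨x, rfl⟩ := hg b
  refine ⟨f x, le_antisymm ?_ ?_⟩ <;>
    simp only [φ, OrderEmbedding.coe_ofMapLEIff, Function.comp_apply, ← h,
      Function.surjInv_eq hf, le_rfl]

theorem OrderIso.natCard_atoms_eq {α β : Type*} [PartialOrder α] [OrderBot α] [PartialOrder β]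
    [OrderBot β] (φ : α ≃o β) : Nat.card {a : α // IsAtom a} = Nat.card {b : β // IsAtom b} :=
  Nat.card_congr (φ.toEquiv.subtypeEquiv fun a => (φ.isAtom_iff a).symm)

section Submodule

variable {K L V W : Type*} [DivisionRing K] [DivisionRing L] [AddCommGroup V] [Module K V]
  [AddCommGroup W] [Module L W]

theorem finrank_eq_of_orderIso_submodule [FiniteDimensional K V] [FiniteDimensional L W]
    (φ : Submodule K V ≃o Submodule L W) : Module.finrank K V = Module.finrank L W := by
  have h : Module.length K V = Module.length L W := by
    rw [← WithBot.coe_inj, Module.coe_length, Module.coe_length, Order.krullDim_eq_of_orderIso φ]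
  rwa [Module.length_eq_finrank, Module.length_eq_finrank, Nat.cast_inj] at h

theorem Submodule.natCard_atoms [Finite K] {n : ℕ} (hn : Module.finrank K V = n) :
    Nat.card {p : Submodule K V // IsAtom p} = ∑ i ∈ Finset.range n, Nat.card K ^ i := by
  rw [← Projectivization.card_of_finrank K V hn,
    Nat.card_congr (Projectivization.equivSubmodule K V)]
  exact Nat.card_congr (Equiv.subtypeEquivRight fun p => Submodule.isAtom_iff_finrank_eq_one)

end Submodule

namespace Module.End

variable {K V : Type*} [DivisionRing K] [AddCommGroup V] [Module K V]

theorem exists_range_eq (p : Submodule K V) : ∃ f : Module.End K V, range f = p := by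
  obtain ⟨q, hpq⟩ := p.exists_isCompl
  exact ⟨p.projection q hpq, p.range_projection hpq⟩

theorem exists_ker_eq (p : Submodule K V) : ∃ f : Module.End K V, ker f = p := by
  obtain ⟨q, hpq⟩ := p.exists_isCompl
  exact ⟨q.projection p hpq.symm, q.ker_projection hpq.symm⟩

theorem ker_mul_of_isUnit {u : Module.End K V} (hu : IsUnit u) (f : Module.End K V) :
    ker (u * f) = ker f :=
  LinearMap.ker_comp_of_ker_eq_bot f
    (LinearMap.ker_eq_bot_of_injective ((Module.End.isUnit_iff u).mp hu).injective)

theorem forall_mul_eq_zero_imp_iff (f g : Module.End K V) :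
    (∀ h : Module.End K V, f * h = 0 → g * h = 0) ↔ ker f ≤ ker g := by
  simp only [Module.End.mul_eq_comp, ← LinearMap.range_le_ker_iff]
  refine ⟨fun H => ?_, fun H h hh => hh.trans H⟩
  obtain ⟨h, hh⟩ := exists_range_eq (ker f)
  exact hh ▸ H h hh.le

end Module.End

section CompressedZeroDivisorGraph

variable {R : Type*} [Ring R]

theorem ringAssoc_equivalence : Equivalence (ringAssoc R) where
  refl a := ⟨1, 1, by simp, by simp⟩
  symm := by
    rintro a b ⟨u, v, rfl, h⟩
    exact ⟨u⁻¹, v⁻¹, by simp [mul_assoc], by rw [h]; simp [← mul_assoc]⟩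
  trans := by
    rintro a b c ⟨u, v, rfl, h⟩ ⟨u', v', rfl, h'⟩
    exact ⟨u' * u, v * v', by simp [mul_assoc], by rw [h, h']; simp [mul_assoc]⟩

theorem quot_mk_ringAssoc_eq_iff {a b : R} :
    Quot.mk (ringAssoc R) a = Quot.mk (ringAssoc R) b ↔ ringAssoc R a b :=
  Quot.eq.trans ringAssoc_equivalence.eqvGen_iff

theorem thetaEdge_mk {a b : R} : thetaEdge R (Quot.mk _ a) (Quot.mk _ b) ↔ a * b = 0 := by
  refine ⟨?_, fun h => ⟨a, b, rfl, rfl, h⟩⟩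
  rintro ⟨a', b', ha, hb, h⟩
  obtain ⟨-, v, -, rfl⟩ := quot_mk_ringAssoc_eq_iff.mp ha
  obtain ⟨u, -, rfl, -⟩ := quot_mk_ringAssoc_eq_iff.mp hb
  rwa [mul_assoc, ← mul_assoc a, Units.mul_right_eq_zero, Units.mul_left_eq_zero] at h

theorem forall_thetaEdge_imp_iff_of_iso {S : Type*} [Ring S]
    {e : Quot (ringAssoc R) ≃ Quot (ringAssoc S)}
    (he : ∀ x y, thetaEdge R x y ↔ thetaEdge S (e x) (e y)) (x y : Quot (ringAssoc R)) :
    (∀ z, thetaEdge R x z → thetaEdge R y z) ↔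
      ∀ z, thetaEdge S (e x) z → thetaEdge S (e y) z := by
  simp only [he]
  exact e.forall_congr_right (q := fun z => thetaEdge S (e x) z → thetaEdge S (e y) z)

end CompressedZeroDivisorGraph

section MatrixTheta

variable {K ι : Type*} [Field K] [Fintype ι] [DecidableEq ι]

noncomputable def thetaKer : Quot (ringAssoc (Matrix ι ι K)) → Submodule K (ι → K) :=
  Quot.lift (fun a => ker (Matrix.toLinAlgEquiv' a)) fun a b ⟨_, v, _, h⟩ => by
    rw [h, map_mul]
    exact Module.End.ker_mul_of_isUnit (v.isUnit.map _) _

theorem thetaKer_surjective : Function.Surjective (thetaKer (K := K) (ι := ι)) := fun p => by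
  obtain ⟨f, hf⟩ := Module.End.exists_ker_eq p
  exact ⟨Quot.mk _ (Matrix.toLinAlgEquiv'.symm f), by simp [thetaKer, hf]⟩

theorem forall_thetaEdge_imp_iff_thetaKer_le (x y : Quot (ringAssoc (Matrix ι ι K))) :
    (∀ z, thetaEdge _ x z → thetaEdge _ y z) ↔ thetaKer x ≤ thetaKer y := by
  induction x using Quot.ind with | mk a => ?_
  induction y using Quot.ind with | mk b => ?_
  rw [Quot.mk_surjective.forall]
  simp only [thetaEdge_mk, thetaKer, ← Module.End.forall_mul_eq_zero_imp_iff,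
    Matrix.toLinAlgEquiv'.surjective.forall, ← map_mul, map_eq_zero_iff _ (AlgEquiv.injective _)]

theorem nonempty_orderIso_submodule_of_thetaIso {L κ : Type*} [Field L] [Fintype κ]
    [DecidableEq κ] (h : ThetaIso (Matrix ι ι K) (Matrix κ κ L)) :
    Nonempty (Submodule K (ι → K) ≃o Submodule L (κ → L)) := by
  obtain ⟨e, he⟩ := h
  refine nonempty_orderIso_of_surjective_of_le_iff thetaKer_surjective
    (thetaKer_surjective.comp e.surjective) fun x y => ?_
  simp only [Function.comp_apply, ← forall_thetaEdge_imp_iff_thetaKer_le]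
  exact forall_thetaEdge_imp_iff_of_iso he x y

end MatrixTheta

/-- The function `d(q) = qⁿ⁻¹ + ⋯ + q + 2` is strictly increasing in `q` on the
positive integers; consequently, if `Θ(Mₙ(F)) ≅ Θ(M_m(E))` for finite fields
`F`, `E` and `n > 1` then `n = m` and `F ≅ E`. -/
theorem stmt_8 (n m : ℕ) (hn : 1 < n)
    (F E : Type*) [Field F] [Fintype F] [Field E] [Fintype E] :
    (∀ q q' : ℕ, 0 < q → q < q' →
      (∑ i ∈ Finset.range n, q ^ i) + 1 < (∑ i ∈ Finset.range n, q' ^ i) + 1) ∧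
    (ThetaIso (Matrix (Fin n) (Fin n) F) (Matrix (Fin m) (Fin m) E) →
      n = m ∧ Nonempty (F ≃+* E)) := by
  refine ⟨fun q q' _ hlt => Nat.add_lt_add_right (geom_sum_strictMono hn hlt) 1, fun h => ?_⟩
  obtain ⟨φ⟩ := nonempty_orderIso_submodule_of_thetaIso h
  obtain rfl : n = m := by simpa using finrank_eq_of_orderIso_submodule φ
  have hcard : Nat.card F = Nat.card E := by
    apply (geom_sum_strictMono hn).injective
    simpa [Submodule.natCard_atoms] using φ.natCard_atoms_eq
  exact ⟨rfl, ⟨FiniteField.ringEquivOfCardEq (by simpa using hcard)⟩⟩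
end

section
/- Let q > 1 be a prime power and n a positive integer. The maximum over all subspaces U ⊆ F_qⁿ of the quantity |K(U)| = Σ_{i=0}^{min(u,n−u)} C(u,i)_q·C(n−u,i)_q (where u = dim U) equals Σ_{i=0}^{⌊n/2⌋} C(⌊n/2⌋, i)_q · C(⌈n/2⌉, i)_q, and the maximum is attained exactly when dim U ∈ {⌊n/2⌋, ⌈n/2⌉}. -/
/-!
Write `S(u)` for the sum attached to `dim U = u`. Extending it to `i ≤ n` (the extra terms
vanish) makes the symmetry `S(u) = S(n - u)` evident, so it suffices that `S` is strictly
increasing on `u ≤ n / 2`. Pascal's rule `C(c+1, j+1) = C(c, j+1) + q^(c-j) C(c, j)` reduces the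
termwise comparison `C(a, i) C(c+1, i) ≤ C(a+1, i) C(c, i)` for `a ≤ c` to
`q^(c-j) C(a, j+1) C(c, j) ≤ q^(a-j) C(a, j) C(c, j+1)`, which the absorption identity
`C(m, j+1) (q^(j+1) - 1) = C(m, j) (q^(m-j) - 1)` turns into `q^(a-j) ≤ q^(c-j)`.
Strictness comes from the term `i = u + 1`, which vanishes in `S(u)` but not in `S(u + 1)`.
-/

/-- The Gaussian (`q`-binomial) coefficient. -/
def gaussBinom (q : ℕ) : ℕ → ℕ → ℕ
  | _, 0 => 1
  | 0, _ + 1 => 0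
  | n + 1, k + 1 => gaussBinom q n (k + 1) + q ^ (n - k) * gaussBinom q n k

open Finset

section GaussBinom

variable (q : ℕ)

@[simp]
lemma gaussBinom_zero_right (n : ℕ) : gaussBinom q n 0 = 1 := by
  cases n <;> rfl

lemma gaussBinom_succ_succ (n k : ℕ) :
    gaussBinom q (n + 1) (k + 1) = gaussBinom q n (k + 1) + q ^ (n - k) * gaussBinom q n k :=
  rfl

lemma gaussBinom_eq_zero_of_lt {n k : ℕ} (h : n < k) : gaussBinom q n k = 0 := by
  induction n generalizing k with
  | zero => obtain ⟨k, rfl⟩ := Nat.exists_eq_add_one_of_ne_zero (by omega : k ≠ 0); rfl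
  | succ n ih =>
    obtain ⟨k, rfl⟩ := Nat.exists_eq_add_one_of_ne_zero (by omega : k ≠ 0)
    rw [gaussBinom_succ_succ, ih (by omega), ih (by omega), mul_zero, add_zero]

@[simp]
lemma gaussBinom_self (n : ℕ) : gaussBinom q n n = 1 := by
  induction n with
  | zero => rfl
  | succ n ih => rw [gaussBinom_succ_succ, ih, gaussBinom_eq_zero_of_lt q n.lt_succ_self]; simp

lemma gaussBinom_succ_right_eq (m j : ℕ) :
    (gaussBinom q m (j + 1) : ℤ) * (q ^ (j + 1) - 1) = gaussBinom q m j * (q ^ (m - j) - 1) := by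
  induction m generalizing j with
  | zero => simp [gaussBinom_eq_zero_of_lt]
  | succ m ih =>
    cases j with
    | zero =>
      have h0 := ih 0
      simp only [gaussBinom_succ_succ, gaussBinom_zero_right, Nat.sub_zero, zero_add] at h0 ⊢
      push_cast
      linear_combination h0
    | succ j =>
      simp only [gaussBinom_succ_succ, Nat.add_sub_add_right]
      push_cast
      -- after this both sides are `C(m, j+1)` times an expression equal to `q^(m+1) - 1`
      rw [add_mul, add_mul, ih (j + 1), mul_assoc, mul_assoc, ← ih j]
      rcases lt_or_ge m (j + 1) with hm | hm
      · simp [gaussBinom_eq_zero_of_lt q hm]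
      · have e₁ : (q : ℤ) ^ (m - (j + 1)) * q ^ (j + 2) = q ^ (m + 1) := by
          rw [← pow_add]; congr 1; omega
        have e₂ : (q : ℤ) ^ (m - j) * q ^ (j + 1) = q ^ (m + 1) := by
          rw [← pow_add]; congr 1; omega
        linear_combination (gaussBinom q m (j + 1) : ℤ) * (e₁ - e₂)

end GaussBinom

section GaussBinomPositivity

variable {q : ℕ}

lemma gaussBinom_pos (hq : 0 < q) {n k : ℕ} (h : k ≤ n) : 0 < gaussBinom q n k := by
  induction n generalizing k with
  | zero => simp [Nat.le_zero.mp h]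
  | succ n ih =>
    cases k with
    | zero => simp
    | succ k =>
      have hpos := ih (Nat.le_of_succ_le_succ h)
      rw [gaussBinom_succ_succ]
      positivity

lemma pow_mul_gaussBinom_succ_mul_le (hq : 1 < q) {a c : ℕ} (hac : a ≤ c) (j : ℕ) :
    q ^ (c - j) * (gaussBinom q a (j + 1) * gaussBinom q c j) ≤
      q ^ (a - j) * (gaussBinom q a j * gaussBinom q c (j + 1)) := by
  have hD : (0 : ℤ) < q ^ (j + 1) - 1 := by
    have : (1 : ℤ) < q ^ (j + 1) := by exact_mod_cast Nat.one_lt_pow j.succ_ne_zero hq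
    linarith
  have hpow : (q : ℤ) ^ (a - j) ≤ q ^ (c - j) := by
    exact_mod_cast Nat.pow_le_pow_right (by omega) (by omega)
  have habs_a := gaussBinom_succ_right_eq q a j
  have habs_c := gaussBinom_succ_right_eq q c j
  zify
  refine le_of_mul_le_mul_right ?_ hD
  rw [← sub_nonneg]
  have hdiff :
      (q : ℤ) ^ (a - j) * (gaussBinom q a j * gaussBinom q c (j + 1)) * (q ^ (j + 1) - 1) -
        q ^ (c - j) * (gaussBinom q a (j + 1) * gaussBinom q c j) * (q ^ (j + 1) - 1) =
      gaussBinom q a j * gaussBinom q c j * (q ^ (c - j) - q ^ (a - j)) := by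
    linear_combination (q ^ (a - j) * gaussBinom q a j : ℤ) * habs_c -
      (q ^ (c - j) * gaussBinom q c j : ℤ) * habs_a
  rw [hdiff]
  exact mul_nonneg (by positivity) (sub_nonneg.mpr hpow)

lemma gaussBinom_mul_gaussBinom_succ_le (hq : 1 < q) {a c : ℕ} (hac : a ≤ c) (i : ℕ) :
    gaussBinom q a i * gaussBinom q (c + 1) i ≤ gaussBinom q (a + 1) i * gaussBinom q c i := by
  cases i with
  | zero => simp
  | succ j =>
    have hcomp := pow_mul_gaussBinom_succ_mul_le hq hac j
    rw [gaussBinom_succ_succ, gaussBinom_succ_succ]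
    nlinarith

end GaussBinomPositivity

/-- `|K(U)|` for `dim U = u` in an `n`-dimensional space over `𝔽_q`. -/
def cliqueCount (q n u : ℕ) : ℕ :=
  ∑ i ∈ range (min u (n - u) + 1), gaussBinom q u i * gaussBinom q (n - u) i

lemma cliqueCount_eq_sum_range (q : ℕ) {n u : ℕ} (hu : u ≤ n) :
    cliqueCount q n u = ∑ i ∈ range (n + 1), gaussBinom q u i * gaussBinom q (n - u) i := by
  refine sum_subset (range_subset_range.mpr (by omega)) fun i _ hi => ?_
  rw [mem_range, not_lt] at hi
  rcases le_total u (n - u) with h | h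
  · rw [gaussBinom_eq_zero_of_lt q (by omega : u < i), zero_mul]
  · rw [gaussBinom_eq_zero_of_lt q (by omega : n - u < i), mul_zero]

lemma cliqueCount_sub (q : ℕ) {n u : ℕ} (hu : u ≤ n) :
    cliqueCount q n (n - u) = cliqueCount q n u := by
  simp only [cliqueCount, Nat.sub_sub_self hu, min_comm (n - u), mul_comm]

lemma cliqueCount_lt_succ {q : ℕ} (hq : 1 < q) {n u : ℕ} (hu : 2 * (u + 1) ≤ n) :
    cliqueCount q n u < cliqueCount q n (u + 1) := by
  rw [cliqueCount_eq_sum_range q (by omega), cliqueCount_eq_sum_range q (by omega),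
    show n - u = n - (u + 1) + 1 by omega]
  refine sum_lt_sum (fun i _ => gaussBinom_mul_gaussBinom_succ_le hq (by omega) i)
    ⟨u + 1, mem_range.mpr (by omega), ?_⟩
  rw [gaussBinom_eq_zero_of_lt q u.lt_succ_self, zero_mul, gaussBinom_self, one_mul]
  exact gaussBinom_pos (by omega) (by omega)

lemma cliqueCount_strictMonoOn {q : ℕ} (hq : 1 < q) (n : ℕ) :
    StrictMonoOn (cliqueCount q n) (Set.Iic (n / 2)) :=
  strictMonoOn_Iic_of_lt_succ fun _ hu => cliqueCount_lt_succ hq (by omega)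

lemma cliqueCount_le_middle {q : ℕ} (hq : 1 < q) {n u : ℕ} (hu : u ≤ n) :
    cliqueCount q n u ≤ cliqueCount q n (n / 2) := by
  have hmono := (cliqueCount_strictMonoOn hq n).monotoneOn
  rcases le_or_gt u (n / 2) with h | h
  · exact hmono h Set.self_mem_Iic h
  · rw [← cliqueCount_sub q hu]
    exact hmono (Set.mem_Iic.mpr (by omega)) Set.self_mem_Iic (by omega)

lemma cliqueCount_eq_middle_iff {q : ℕ} (hq : 1 < q) {n u : ℕ} (hu : u ≤ n) :
    cliqueCount q n u = cliqueCount q n (n / 2) ↔ u = n / 2 ∨ u = (n + 1) / 2 := by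
  have hinj := (cliqueCount_strictMonoOn hq n).injOn
  rcases le_or_gt u (n / 2) with h | h
  · rw [hinj.eq_iff h Set.self_mem_Iic]
    omega
  · rw [← cliqueCount_sub q hu, hinj.eq_iff (Set.mem_Iic.mpr (by omega)) Set.self_mem_Iic]
    omega

lemma cliqueCount_middle (q n : ℕ) :
    cliqueCount q n (n / 2) =
      ∑ i ∈ range (n / 2 + 1), gaussBinom q (n / 2) i * gaussBinom q ((n + 1) / 2) i := by
  rw [cliqueCount, min_eq_left (by omega), show n - n / 2 = (n + 1) / 2 by omega]

lemma exists_submodule_finrank_eq (K : Type*) {V : Type*} [DivisionRing K] [AddCommGroup V]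
    [Module K V] [FiniteDimensional K V] {k : ℕ} (hk : k ≤ Module.finrank K V) :
    ∃ U : Submodule K V, Module.finrank K U = k := by
  let b := Module.finBasis K V
  refine ⟨Submodule.span K (Set.range (b ∘ Fin.castLE hk)), ?_⟩
  rw [finrank_span_eq_card (b.linearIndependent.comp _ (Fin.castLE_injective hk)),
    Fintype.card_fin]

theorem stmt_12_general (q n : ℕ) (hq : 1 < q)
    (F : Type*) [Field F] :
    (∀ U : Submodule F (Fin n → F),
      (∑ i ∈ Finset.range (min (Module.finrank F U) (n - Module.finrank F U) + 1),
          gaussBinom q (Module.finrank F U) i *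
            gaussBinom q (n - Module.finrank F U) i) ≤
        ∑ i ∈ Finset.range (n / 2 + 1),
          gaussBinom q (n / 2) i * gaussBinom q ((n + 1) / 2) i ∧
      ((∑ i ∈ Finset.range (min (Module.finrank F U) (n - Module.finrank F U) + 1),
          gaussBinom q (Module.finrank F U) i *
            gaussBinom q (n - Module.finrank F U) i) =
        (∑ i ∈ Finset.range (n / 2 + 1),
          gaussBinom q (n / 2) i * gaussBinom q ((n + 1) / 2) i) ↔
        (Module.finrank F U = n / 2 ∨ Module.finrank F U = (n + 1) / 2))) ∧
    ∃ U : Submodule F (Fin n → F),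
      (∑ i ∈ Finset.range (min (Module.finrank F U) (n - Module.finrank F U) + 1),
          gaussBinom q (Module.finrank F U) i *
            gaussBinom q (n - Module.finrank F U) i) =
        ∑ i ∈ Finset.range (n / 2 + 1),
          gaussBinom q (n / 2) i * gaussBinom q ((n + 1) / 2) i := by
  rw [← cliqueCount_middle q n]
  have hdim (U : Submodule F (Fin n → F)) : Module.finrank F U ≤ n :=
    (Submodule.finrank_le U).trans_eq (Module.finrank_fin_fun F)
  obtain ⟨U₀, hU₀⟩ := exists_submodule_finrank_eq F ((Nat.div_le_self n 2).trans_eq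
    (Module.finrank_fin_fun F).symm)
  refine ⟨fun U => ⟨cliqueCount_le_middle hq (hdim U), cliqueCount_eq_middle_iff hq (hdim U)⟩,
    U₀, ?_⟩
  change cliqueCount q n _ = _
  rw [hU₀]

/-- The size of the directed clique `K(U)`, namely
`∑_{i=0}^{min(u,n−u)} C(u,i)_q * C(n−u,i)_q` with `u = dim U`, is maximal
exactly when `dim U ∈ {⌊n/2⌋, ⌈n/2⌉}`, the maximum being
`∑_{i=0}^{⌊n/2⌋} C(⌊n/2⌋,i)_q * C(⌈n/2⌉,i)_q`; and the maximum is attained. -/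
theorem stmt_12 (q n : ℕ) (hq : 1 < q) (hn : 1 ≤ n)
    (F : Type*) [Field F] [Fintype F] (hF : Fintype.card F = q) :
    (∀ U : Submodule F (Fin n → F),
      (∑ i ∈ Finset.range (min (Module.finrank F U) (n - Module.finrank F U) + 1),
          gaussBinom q (Module.finrank F U) i *
            gaussBinom q (n - Module.finrank F U) i) ≤
        ∑ i ∈ Finset.range (n / 2 + 1),
          gaussBinom q (n / 2) i * gaussBinom q ((n + 1) / 2) i ∧
      ((∑ i ∈ Finset.range (min (Module.finrank F U) (n - Module.finrank F U) + 1),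
          gaussBinom q (Module.finrank F U) i *
            gaussBinom q (n - Module.finrank F U) i) =
        (∑ i ∈ Finset.range (n / 2 + 1),
          gaussBinom q (n / 2) i * gaussBinom q ((n + 1) / 2) i) ↔
        (Module.finrank F U = n / 2 ∨ Module.finrank F U = (n + 1) / 2))) ∧
    ∃ U : Submodule F (Fin n → F),
      (∑ i ∈ Finset.range (min (Module.finrank F U) (n - Module.finrank F U) + 1),
          gaussBinom q (Module.finrank F U) i *
            gaussBinom q (n - Module.finrank F U) i) =
        ∑ i ∈ Finset.range (n / 2 + 1),
          gaussBinom q (n / 2) i * gaussBinom q ((n + 1) / 2) i :=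
  stmt_12_general q n hq F
end

section
/- Let q > 1 be a prime power and n ≥ 3. Every dominating set for the undirected graph Θ̄(Mₙ(F_q)) restricted to vertices different from [0] and [1] has at least C(n,1)_q = (qⁿ−1)/(q−1) elements, and a dominating set of this size exists. -/
open Module Submodule

lemma gaussBinom_one (q : ℕ) : ∀ n, gaussBinom q n 1 = ∑ i ∈ Finset.range n, q ^ i
  | 0 => by simp [gaussBinom]
  | n + 1 => by
    show gaussBinom q n 1 + q ^ (n - 0) * gaussBinom q n 0 = _
    rw [Finset.sum_range_succ, ← gaussBinom_one q n]
    simp [gaussBinom]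

lemma geom_mul (q : ℕ) (hq : 1 ≤ q) : ∀ n, (∑ i ∈ Finset.range n, q ^ i) * (q - 1) = q ^ n - 1
  | 0 => by simp
  | n + 1 => by
    have ih := geom_mul q hq n
    have h1 : 1 ≤ q ^ n := Nat.one_le_pow _ _ hq
    have h2 : q ^ (n + 1) = q ^ n * q := pow_succ q n
    have h3 : q ^ n * (q - 1) = q ^ n * q - q ^ n := by
      rw [Nat.mul_sub_left_distrib, Nat.mul_one]
    have h4 : q ^ n ≤ q ^ n * q := Nat.le_mul_of_pos_right _ (by omega)
    rw [Finset.sum_range_succ, Nat.add_mul, ih]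
    omega

lemma card_lines_mul (F : Type*) [Field F] [Fintype F] (M : Type*) [AddCommGroup M]
    [Module F M] [Fintype M] :
    Nat.card {L : Submodule F M // Module.finrank F L = 1} * (Fintype.card F - 1)
      = Fintype.card M - 1 := by
  classical
  haveI : Finite (Submodule F M) :=
    Finite.of_injective (fun L : Submodule F M => (L : Set M)) SetLike.coe_injective
  haveI : Fintype {L : Submodule F M // Module.finrank F L = 1} := Fintype.ofFinite _
  have cardX : Fintype.card {v : M // v ≠ 0} = Fintype.card M - 1 := by
    have h := Fintype.card_subtype_compl (fun v : M => v = 0)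
    rw [Fintype.card_subtype_eq] at h
    exact h
  let φ : {v : M // v ≠ 0} → {L : Submodule F M // Module.finrank F L = 1} :=
    fun v => ⟨span F {v.1}, finrank_span_singleton v.2⟩
  have cardfib : ∀ L : {L : Submodule F M // Module.finrank F L = 1},
      Fintype.card {v // φ v = L} = Fintype.card F - 1 := by
    intro L
    have hLfin : Fintype.card L.1 = Fintype.card F := by
      rw [card_eq_pow_finrank (K := F) (V := L.1), L.2, pow_one]
    have e : {v // φ v = L} ≃ {x : L.1 // x ≠ 0} := by
      refine ⟨fun v => ⟨⟨v.1.1, ?_⟩, ?_⟩, fun x => ⟨⟨x.1.1, ?_⟩, ?_⟩, ?_, ?_⟩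
      · have : span F {v.1.1} = L.1 := congrArg Subtype.val v.2
        exact this ▸ mem_span_singleton_self v.1.1
      · exact fun h => v.1.2 (congrArg Subtype.val h)
      · intro h; exact x.2 (Subtype.ext h)
      · apply Subtype.ext
        show span F {x.1.1} = L.1
        apply eq_of_le_of_finrank_eq
        · exact span_le.2 (Set.singleton_subset_iff.2 x.1.2)
        · rw [L.2, finrank_span_singleton]
          intro h; exact x.2 (Subtype.ext h)
      · intro v; apply Subtype.ext; apply Subtype.ext; rfl
      · intro x; apply Subtype.ext; apply Subtype.ext; rfl
    rw [Fintype.card_congr e]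
    have h := Fintype.card_subtype_compl (fun x : L.1 => x = 0)
    rw [Fintype.card_subtype_eq, hLfin] at h
    exact h
  have key : Fintype.card {v : M // v ≠ 0}
      = Fintype.card {L : Submodule F M // Module.finrank F L = 1} * (Fintype.card F - 1) := by
    rw [← Fintype.card_congr (Equiv.sigmaFiberEquiv φ), Fintype.card_sigma]
    simp [cardfib, Finset.sum_const, mul_comm]
  rw [Nat.card_eq_fintype_card, ← cardX, key]

lemma lines_to_hyps_inj (F : Type*) [Field F] (n : ℕ) :
    ∃ ι : {L : Submodule F (Fin n → F) // Module.finrank F L = 1} →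
      {H : Submodule F (Fin n → F) // Module.finrank F H = n - 1}, Function.Injective ι := by
  have hrankV : Module.finrank F (Fin n → F) = n := by
    rw [Module.finrank_pi]; exact Fintype.card_fin n
  let b := Pi.basisFun F (Fin n)
  let e : Module.Dual F (Fin n → F) ≃ₗ[F] (Fin n → F) := b.toDualEquiv.symm
  have hrk : ∀ L : Submodule F (Fin n → F), Module.finrank F L = 1 →
      Module.finrank F (Submodule.map e.toLinearMap L.dualAnnihilator) = n - 1 := by
    intro L hL
    rw [LinearEquiv.finrank_map_eq e L.dualAnnihilator]
    have e1 : ((Fin n → F) ⧸ L) ≃ₗ[F] L.dualAnnihilator := Subspace.quotEquivAnnihilator L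
    have h1 : Module.finrank F ((Fin n → F) ⧸ L) = Module.finrank F L.dualAnnihilator :=
      LinearEquiv.finrank_eq e1
    have h2 := Submodule.finrank_quotient_add_finrank L
    rw [hrankV] at h2
    omega
  refine ⟨fun L => ⟨Submodule.map e.toLinearMap L.1.dualAnnihilator, hrk L.1 L.2⟩, ?_⟩
  intro L L' h
  have h' : Submodule.map e.toLinearMap L.1.dualAnnihilator
      = Submodule.map e.toLinearMap L'.1.dualAnnihilator := congrArg Subtype.val h
  have h'' := Submodule.map_injective_of_injective (f := e.toLinearMap) e.injective h'
  exact Subtype.ext (Subspace.dualAnnihilator_inj.1 h'')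

/-- Vertices of `Θ̄(Mₙ(F_q))` minus `[0] = (⊥, ⊤)` and `[1] = (⊤, ⊥)`:
pairs `(V, W)` of subspaces with `dim V + dim W = n`. -/
def ThetaVtx (F : Type*) [Field F] (n : ℕ) :=
  {p : Submodule F (Fin n → F) × Submodule F (Fin n → F) //
    Module.finrank F p.1 + Module.finrank F p.2 = n ∧ p ≠ (⊥, ⊤) ∧ p ≠ (⊤, ⊥)}

/-- Undirected adjacency in `Θ̄(Mₙ(F_q))`: `(V₁,W₁)` and `(V₂,W₂)` are
adjacent iff `V₂ ⊆ W₁` or `V₁ ⊆ W₂`. -/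
def ThetaAdj (F : Type*) [Field F] (n : ℕ) (p r : ThetaVtx F n) : Prop :=
  r.val.1 ≤ p.val.2 ∨ p.val.1 ≤ r.val.2

/-- `D` is a dominating set: every vertex is in `D` or adjacent to a vertex
of `D`. -/
def IsDomSet (F : Type*) [Field F] (n : ℕ) (D : Set (ThetaVtx F n)) : Prop :=
  ∀ v : ThetaVtx F n, v ∈ D ∨ ∃ d ∈ D, ThetaAdj F n d v

/-- For `n ≥ 3`, every dominating set of `Θ̄(Mₙ(F_q)) ∖ {[0],[1]}` has at
least `C(n,1)_q` elements, and one of exactly this size exists. -/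
theorem stmt_14 (q n : ℕ) (hq : 1 < q) (hn : 3 ≤ n)
    (F : Type*) [Field F] [Fintype F] (hF : Fintype.card F = q) :
    (∀ D : Set (ThetaVtx F n), IsDomSet F n D → gaussBinom q n 1 ≤ D.ncard) ∧
    ∃ D : Set (ThetaVtx F n), IsDomSet F n D ∧ D.ncard = gaussBinom q n 1 := by
  classical
  have hrankV : Module.finrank F (Fin n → F) = n := by
    rw [Module.finrank_pi]; exact Fintype.card_fin n
  -- basic facts about vertices
  have hfr : ∀ v : ThetaVtx F n,
      0 < Module.finrank F v.val.1 ∧ 0 < Module.finrank F v.val.2 := by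
    intro v
    obtain ⟨hsum, h01, h10⟩ := v.2
    constructor
    · rcases Nat.eq_zero_or_pos (Module.finrank F v.val.1) with h | h
      · exfalso
        have hb : v.val.1 = ⊥ := Submodule.finrank_eq_zero.1 h
        have ht : v.val.2 = ⊤ := Submodule.eq_top_of_finrank_eq (by omega)
        exact h01 (Prod.ext hb ht)
      · exact h
    · rcases Nat.eq_zero_or_pos (Module.finrank F v.val.2) with h | h
      · exfalso
        have hb : v.val.2 = ⊥ := Submodule.finrank_eq_zero.1 h
        have ht : v.val.1 = ⊤ := Submodule.eq_top_of_finrank_eq (by omega)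
        exact h10 (Prod.ext ht hb)
      · exact h
  -- number of lines
  have hNlines : Nat.card {L : Submodule F (Fin n → F) // Module.finrank F L = 1}
      = gaussBinom q n 1 := by
    have h := card_lines_mul F (Fin n → F)
    have hcardM : Fintype.card (Fin n → F) = q ^ n := by
      simp [Fintype.card_fun, hF]
    rw [hcardM, hF] at h
    have h2 := geom_mul q (le_of_lt hq) n
    rw [gaussBinom_one]
    exact Nat.eq_of_mul_eq_mul_right (by omega) (h.trans h2.symm)
  haveI : Finite (Submodule F (Fin n → F)) :=
    Finite.of_injective (fun L : Submodule F (Fin n → F) => (L : Set (Fin n → F)))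
      SetLike.coe_injective
  haveI : Finite (ThetaVtx F n) := by unfold ThetaVtx; infer_instance
  constructor
  · -- lower bound
    intro D hD
    suffices h : ∃ f : {L : Submodule F (Fin n → F) // Module.finrank F L = 1} → ThetaVtx F n,
        (∀ L, f L ∈ D) ∧ Function.Injective f by
      obtain ⟨f, hfD, hfinj⟩ := h
      have hle : Nat.card {L : Submodule F (Fin n → F) // Module.finrank F L = 1}
          ≤ Nat.card D :=
        Nat.card_le_card_of_injective (fun L => (⟨f L, hfD L⟩ : D))
          (fun a b hab => hfinj (congrArg Subtype.val hab))
      rw [hNlines, Nat.card_coe_set_eq] at hle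
      exact hle
    by_cases hA : ∀ H : Submodule F (Fin n → F), Module.finrank F H = n - 1 →
        ∃ d ∈ D, d.val.2 = H
    · obtain ⟨ι, hι⟩ := lines_to_hyps_inj F n
      choose d hd1 hd2 using fun L : {L : Submodule F (Fin n → F) // Module.finrank F L = 1} =>
        hA (ι L).1 (ι L).2
      exact ⟨d, hd1, fun L L' h => hι (Subtype.ext (by rw [← hd2 L, ← hd2 L', h]))⟩
    · push_neg at hA
      obtain ⟨H₀, hH₀rk, hH₀⟩ := hA
      have hH₀bot : H₀ ≠ ⊥ := fun h => by
        rw [h, finrank_bot] at hH₀rk; omega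
      set vL : {L : Submodule F (Fin n → F) // Module.finrank F L = 1} → ThetaVtx F n :=
        fun L => ⟨(H₀, L.1), by rw [hH₀rk, L.2]; omega,
          fun h => hH₀bot (congrArg Prod.fst h),
          fun h => by
            have h2 : L.1 = ⊥ := congrArg Prod.snd h
            have := L.2
            rw [h2, finrank_bot] at this
            omega⟩ with hvL
      have hcov : ∀ L, ∃ d, d ∈ D ∧ (d = vL L ∨ d.val.1 = L.1) := by
        intro L
        rcases hD (vL L) with hmem | ⟨d, hdD, hadj⟩
        · exact ⟨vL L, hmem, Or.inl rfl⟩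
        · have hadj' : (vL L).val.1 ≤ d.val.2 ∨ d.val.1 ≤ (vL L).val.2 := hadj
          have hd1pos := (hfr d).1
          have hsum := d.2.1
          rcases hadj' with h1 | h2
          · exfalso
            have h1' : H₀ ≤ d.val.2 := h1
            have hge : n - 1 ≤ Module.finrank F d.val.2 :=
              hH₀rk ▸ Submodule.finrank_mono h1'
            exact hH₀ d hdD
              (Submodule.eq_of_le_of_finrank_eq h1' (by omega)).symm
          · have h2' : d.val.1 ≤ L.1 := h2
            have hle : Module.finrank F d.val.1 ≤ 1 := L.2 ▸ Submodule.finrank_mono h2'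
            exact ⟨d, hdD, Or.inr (Submodule.eq_of_le_of_finrank_eq h2' (by rw [L.2]; omega))⟩
      choose f hf1 hf2 using hcov
      refine ⟨f, hf1, ?_⟩
      intro L L' h
      apply Subtype.ext
      rcases hf2 L with hL | hL <;> rcases hf2 L' with hL' | hL'
      · exact congrArg (fun v => v.val.2) (hL.symm.trans (h.trans hL'))
      · exfalso
        have h1 : H₀ = L'.1 := by rw [← hL', ← h, hL]
        have h2 := L'.2
        rw [← h1, hH₀rk] at h2
        omega
      · exfalso
        have h1 : H₀ = L.1 := by rw [← hL, h, hL']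
        have h2 := L.2
        rw [← h1, hH₀rk] at h2
        omega
      · rw [← hL, ← hL', h]
  · -- existence
    obtain ⟨ι, hι⟩ := lines_to_hyps_inj F n
    have hex : ∃ v : Fin n → F, v ≠ 0 := by
      refine ⟨(Pi.basisFun F (Fin n)) ⟨0, by omega⟩, Basis.ne_zero _ _⟩
    obtain ⟨v₀, hv₀⟩ := hex
    set H₀ := ι ⟨Submodule.span F {v₀}, finrank_span_singleton hv₀⟩ with hH₀
    set g : {L : Submodule F (Fin n → F) // Module.finrank F L = 1} → ThetaVtx F n :=
      fun L => ⟨(L.1, H₀.1), by rw [L.2, H₀.2]; omega,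
        fun h => by
          have h1 : L.1 = ⊥ := congrArg Prod.fst h
          have := L.2
          rw [h1, finrank_bot] at this
          omega,
        fun h => by
          have h1 : H₀.1 = ⊥ := congrArg Prod.snd h
          have := H₀.2
          rw [h1, finrank_bot] at this
          omega⟩ with hg
    have ginj : Function.Injective g := by
      intro L L' h
      exact Subtype.ext (congrArg (fun v => v.val.1) h)
    refine ⟨Set.range g, ?_, ?_⟩
    · intro w
      right
      have hw2 : w.val.2 ≠ ⊥ := fun hbot => by
        have := (hfr w).2
        rw [hbot, finrank_bot] at this
        omega
      obtain ⟨x, hx, hx0⟩ := Submodule.exists_mem_ne_zero_of_ne_bot hw2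
      refine ⟨g ⟨Submodule.span F {x}, finrank_span_singleton hx0⟩, Set.mem_range_self _, ?_⟩
      exact Or.inr (Submodule.span_le.2 (Set.singleton_subset_iff.2 hx))
    · rw [← Nat.card_coe_set_eq, Nat.card_range_of_injective ginj, hNlines]
end
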